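/- arXiv:1808.03236 — 2 statements merged into one kernel-verified Lean document; each statement's English description precedes it below -/
import Mathlib

section
/- Let U ⊆ ℝ × ℝ be open, u : ℝ × ℝ → ℝ, and let ω : ℝ × ℝ → ℝ be twice continuously differentiable and nonvanishing on U with Δω = u·ω on U. Define ũ = −u + 2·(ω_x² + ω_y²)/ω². Then the function 1/ω satisfies the Moutard-transformed equation: Δ(1/ω) = ũ·(1/ω) on U. -/
/-!
Differentiating `ω⁻¹` twice gives the pointwise identity
`Δ(1/ω) = 2 (ω_x² + ω_y²) / ω³ - Δω / ω²` wherever `ω` is `C²` and nonzero;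
substituting `Δω = u ω` turns it into the transformed equation.
-/

/-- Partial derivative of `f` at `p` in direction `v`. -/
noncomputable def pd (v : ℝ × ℝ) (f : ℝ × ℝ → ℝ) (p : ℝ × ℝ) : ℝ :=
  fderiv ℝ f p v

/-- Laplacian of `f` at `p`. -/
noncomputable def lap (f : ℝ × ℝ → ℝ) (p : ℝ × ℝ) : ℝ :=
  pd (1, 0) (pd (1, 0) f) p + pd (0, 1) (pd (0, 1) f) p

open Filter Topology

section DirectionalDerivative

variable {f g : ℝ × ℝ → ℝ} {p : ℝ × ℝ} (v : ℝ × ℝ)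

lemma Filter.EventuallyEq.pd_eq (h : f =ᶠ[𝓝 p] g) : pd v f p = pd v g p := by
  simp only [pd, h.fderiv_eq]

lemma pd_neg : pd v (fun q => -f q) p = -pd v f p := by
  simp [pd, fderiv_fun_neg]

lemma pd_mul (hf : DifferentiableAt ℝ f p) (hg : DifferentiableAt ℝ g p) :
    pd v (fun q => f q * g q) p = pd v f p * g p + f p * pd v g p := by
  simp [pd, fderiv_fun_mul hf hg]
  ring

lemma pd_pow (hf : DifferentiableAt ℝ f p) (n : ℕ) :
    pd v (fun q => f q ^ n) p = n * f p ^ (n - 1) * pd v f p := by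
  simp [pd, fderiv_fun_pow n hf, mul_assoc]

lemma pd_inv (hf : DifferentiableAt ℝ f p) (h0 : f p ≠ 0) :
    pd v (fun q => (f q)⁻¹) p = -pd v f p / f p ^ 2 := by
  have h := ((hasFDerivAt_inv h0).comp p hf.hasFDerivAt).fderiv
  simp only [Function.comp_def] at h
  simp [pd, h, div_eq_mul_inv]

lemma ContDiffAt.differentiableAt_pd {n : WithTop ℕ∞} (hf : ContDiffAt ℝ n f p)
    (hn : 2 ≤ n) :
    DifferentiableAt ℝ (pd v f) p := by
  have hfderiv : ContDiffAt ℝ 1 (fderiv ℝ f) p :=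
    hf.fderiv_right (le_of_eq_of_le (by norm_num) hn)
  exact (hfderiv.differentiableAt one_ne_zero).clm_apply (differentiableAt_const v)

end DirectionalDerivative

section Reciprocal

variable {ω : ℝ × ℝ → ℝ} {p : ℝ × ℝ}

lemma pd_pd_inv (hω : ContDiffAt ℝ 2 ω p) (h0 : ω p ≠ 0) (v w : ℝ × ℝ) :
    pd w (pd v (fun q => (ω q)⁻¹)) p
      = 2 * pd v ω p * pd w ω p / ω p ^ 3 - pd w (pd v ω) p / ω p ^ 2 := by
  have hd : DifferentiableAt ℝ ω p := hω.differentiableAt two_ne_zero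
  have hnear : ∀ᶠ q in 𝓝 p, DifferentiableAt ℝ ω q ∧ ω q ≠ 0 :=
    ((hω.eventually (by simp)).and (hω.continuousAt.eventually_ne h0)).mono
      fun q hq => ⟨hq.1.differentiableAt two_ne_zero, hq.2⟩
  have hfirst : pd v (fun q => (ω q)⁻¹) =ᶠ[𝓝 p] fun q => -pd v ω q * (ω q ^ 2)⁻¹ :=
    hnear.mono fun q hq => by rw [pd_inv v hq.1 hq.2, div_eq_mul_inv]
  have hsq : DifferentiableAt ℝ (fun q => ω q ^ 2) p := hd.pow 2
  have hsq0 : ω p ^ 2 ≠ 0 := pow_ne_zero 2 h0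
  rw [hfirst.pd_eq, pd_mul (f := fun q => -pd v ω q) (g := fun q => (ω q ^ 2)⁻¹) w
      (hω.differentiableAt_pd v le_rfl).neg (hsq.inv hsq0), pd_neg,
    pd_inv w hsq hsq0, pd_pow w hd]
  field_simp
  ring

lemma lap_inv (hω : ContDiffAt ℝ 2 ω p) (h0 : ω p ≠ 0) :
    lap (fun q => (ω q)⁻¹) p
      = 2 * (pd (1, 0) ω p ^ 2 + pd (0, 1) ω p ^ 2) / ω p ^ 3 - lap ω p / ω p ^ 2 := by
  simp only [lap, pd_pd_inv hω h0]
  ring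

end Reciprocal

/-- `1/ω` satisfies the Moutard-transformed equation
`Δ(1/ω) = ũ · (1/ω)` with `ũ = -u + 2 (ω_x² + ω_y²)/ω²`. -/
theorem inverse_omega_solves_transformed_equation
    (U : Set (ℝ × ℝ)) (hU : IsOpen U)
    (u ω : ℝ × ℝ → ℝ)
    (hω : ContDiffOn ℝ 2 ω U)
    (hω0 : ∀ p ∈ U, ω p ≠ 0)
    (hωeq : ∀ p ∈ U, lap ω p = u p * ω p) :
    ∀ p ∈ U,
      lap (fun q => 1 / ω q) p
        = (-(u p) + 2 * ((pd (1, 0) ω p) ^ 2 + (pd (0, 1) ω p) ^ 2) / (ω p) ^ 2)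
            * (1 / ω p) := by
  intro p hp
  have h0 := hω0 p hp
  simp only [one_div]
  rw [lap_inv (hω.contDiffAt (hU.mem_nhds hp)) h0, hωeq p hp]
  field_simp
  ring
end

section
/- Let I ⊆ ℝ be open, u : ℝ → ℝ continuous on I, κ, μ ∈ ℝ with μ + κ ≠ 0. Let ω₁ : ℝ → ℝ be twice continuously differentiable and nonvanishing on I with −ω₁'' + u·ω₁ = κ²·ω₁ on I, and let φ₁ : ℝ → ℝ be twice continuously differentiable on I with −φ₁'' + u·φ₁ = μ²·φ₁ on I. Define θ₁ := (1/(μ + κ))·(φ₁' − (ω₁'/ω₁)·φ₁), and the two-dimensional functions ω(x,y) := e^{κy}·ω₁(x), φ(x,y) := e^{μy}·φ₁(x), θ(x,y) := e^{μy}·θ₁(x). Then (φ, θ) satisfies the Moutard relations with respect to ω on I × ℝ: (ωθ)_x = −ω²·(φ/ω)_y and (ωθ)_y = ω²·(φ/ω)_x. (That is, the Darboux transformation is the one-dimensional reduction of the Moutard transformation with generating solution e^{κy}ω₁(x).) -/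
open Real

noncomputable def sepExp (c : ℝ) (F : ℝ → ℝ) : ℝ × ℝ → ℝ :=
  fun q => exp (c * q.2) * F q.1

noncomputable def darbouxTransform (κ μ : ℝ) (ω₁ φ₁ : ℝ → ℝ) : ℝ → ℝ :=
  fun x => (1 / (μ + κ)) * (deriv φ₁ x - (deriv ω₁ x / ω₁ x) * φ₁ x)

def MoutardRelationsAt (ω φ θ : ℝ × ℝ → ℝ) (p : ℝ × ℝ) : Prop :=
  pd (1, 0) (fun q => ω q * θ q) p = -((ω p) ^ 2) * pd (0, 1) (fun q => φ q / ω q) p ∧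
    pd (0, 1) (fun q => ω q * θ q) p = (ω p) ^ 2 * pd (1, 0) (fun q => φ q / ω q) p

section SepExp

variable {c : ℝ} {F : ℝ → ℝ} {F' : ℝ}

theorem hasFDerivAt_sepExp {p : ℝ × ℝ} (hF : HasDerivAt F F' p.1) :
    HasFDerivAt (sepExp c F)
      ((exp (c * p.2) * c * F p.1) • ContinuousLinearMap.snd ℝ ℝ ℝ +
        (exp (c * p.2) * F') • ContinuousLinearMap.fst ℝ ℝ ℝ) p := by
  have hexp : HasDerivAt (fun t => exp (c * t)) (exp (c * p.2) * c) p.2 := by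
    simpa using ((hasDerivAt_id p.2).const_mul c).exp
  refine ((hexp.comp_hasFDerivAt p (hasFDerivAt_snd (𝕜 := ℝ) (p := p))).mul
    (hF.comp_hasFDerivAt p (hasFDerivAt_fst (𝕜 := ℝ) (p := p)))).congr_fderiv ?_
  ext <;> simp [mul_comm]

theorem pd_fst_sepExp (y : ℝ) {x : ℝ} (hF : HasDerivAt F F' x) :
    pd (1, 0) (sepExp c F) (x, y) = exp (c * y) * F' := by
  simp [pd, (hasFDerivAt_sepExp (p := (x, y)) hF).fderiv]

theorem pd_snd_sepExp (y : ℝ) {x : ℝ} (hF : HasDerivAt F F' x) :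
    pd (0, 1) (sepExp c F) (x, y) = c * exp (c * y) * F x := by
  simp [pd, (hasFDerivAt_sepExp (p := (x, y)) hF).fderiv, mul_comm c]

theorem sepExp_mul_sepExp (a b : ℝ) (F G : ℝ → ℝ) :
    (fun q => sepExp a F q * sepExp b G q) = sepExp (a + b) (fun x => F x * G x) := by
  funext q
  simp only [sepExp, add_mul, exp_add]
  ring

theorem sepExp_div_sepExp (a b : ℝ) (F G : ℝ → ℝ) :
    (fun q => sepExp a F q / sepExp b G q) = sepExp (a - b) (fun x => F x / G x) := by
  funext q
  simp only [sepExp, sub_mul, exp_sub]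
  ring

end SepExp

theorem moutardRelationsAt_sepExp {κ μ : ℝ} {A B C : ℝ → ℝ} {A' B' x : ℝ} (y : ℝ)
    (hA : HasDerivAt A A' x) (hB : HasDerivAt B B' x) (hA0 : A x ≠ 0)
    (hAC : HasDerivAt (fun x => A x * C x) ((κ - μ) * A x * B x) x)
    (hC : (μ + κ) * (A x * C x) = A x * B' - A' * B x) :
    MoutardRelationsAt (sepExp κ A) (sepExp μ B) (sepExp μ C) (x, y) := by
  have hBA : HasDerivAt (fun x => B x / A x) ((B' * A x - B x * A') / A x ^ 2) x :=
    hB.div hA hA0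
  rw [MoutardRelationsAt, sepExp_mul_sepExp, sepExp_div_sepExp, pd_fst_sepExp y hAC,
    pd_snd_sepExp y hAC, pd_fst_sepExp y hBA, pd_snd_sepExp y hBA]
  simp only [sepExp, add_mul, sub_mul, exp_add, exp_sub]
  constructor
  · field_simp
    ring
  · field_simp
    linear_combination hC

theorem ContDiffOn.hasDerivAt_deriv_of_isOpen {𝕜 F : Type*} [NontriviallyNormedField 𝕜]
    [NormedAddCommGroup F] [NormedSpace 𝕜 F] {f : 𝕜 → F} {s : Set 𝕜} {x : 𝕜}
    (hf : ContDiffOn 𝕜 2 f s) (hs : IsOpen s) (hx : x ∈ s) :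
    HasDerivAt (deriv f) (deriv (deriv f) x) x :=
  (((hf.deriv_of_isOpen hs (m := 1) le_rfl).contDiffAt (hs.mem_nhds hx)).differentiableAt
    one_ne_zero).hasDerivAt

section Darboux

variable {κ μ x : ℝ} {ω₁ φ₁ : ℝ → ℝ}

theorem mul_darbouxTransform (hμκ : μ + κ ≠ 0) (hω₁0 : ω₁ x ≠ 0) :
    (μ + κ) * (ω₁ x * darbouxTransform κ μ ω₁ φ₁ x) = ω₁ x * deriv φ₁ x - deriv ω₁ x * φ₁ x := by
  simp only [darbouxTransform]
  field_simp

theorem hasDerivAt_mul_darbouxTransform {u ω₁'' φ₁'' : ℝ} (hμκ : μ + κ ≠ 0)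
    (hω₁ : DifferentiableAt ℝ ω₁ x) (hφ₁ : DifferentiableAt ℝ φ₁ x)
    (hω₁' : HasDerivAt (deriv ω₁) ω₁'' x) (hφ₁' : HasDerivAt (deriv φ₁) φ₁'' x)
    (hω₁0 : ω₁ x ≠ 0) (hω₁eq : -ω₁'' + u * ω₁ x = κ ^ 2 * ω₁ x)
    (hφ₁eq : -φ₁'' + u * φ₁ x = μ ^ 2 * φ₁ x) :
    HasDerivAt (fun x => ω₁ x * darbouxTransform κ μ ω₁ φ₁ x) ((κ - μ) * ω₁ x * φ₁ x) x := by
  have hθ₁ := (hφ₁'.sub ((hω₁'.div hω₁.hasDerivAt hω₁0).mul hφ₁.hasDerivAt)).const_mul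
    (1 / (μ + κ))
  refine (hω₁.hasDerivAt.mul hθ₁).congr_deriv ?_
  simp only [Pi.sub_apply, Pi.mul_apply, Pi.div_apply]
  field_simp
  linear_combination ω₁ x * φ₁ x * hω₁eq - ω₁ x ^ 2 * hφ₁eq

end Darboux

theorem darboux_is_reduction_of_moutard_general
    (I : Set ℝ) (hI : IsOpen I)
    (u ω₁ φ₁ : ℝ → ℝ) (κ μ : ℝ)
    (hμκ : μ + κ ≠ 0)
    (hω₁ : ContDiffOn ℝ 2 ω₁ I)
    (hω₁0 : ∀ x ∈ I, ω₁ x ≠ 0)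
    (hω₁eq : ∀ x ∈ I, -(deriv (deriv ω₁) x) + u x * ω₁ x = κ ^ 2 * ω₁ x)
    (hφ₁ : ContDiffOn ℝ 2 φ₁ I)
    (hφ₁eq : ∀ x ∈ I, -(deriv (deriv φ₁) x) + u x * φ₁ x = μ ^ 2 * φ₁ x)
    (ω φ θ : ℝ × ℝ → ℝ)
    (hω : ω = fun p => Real.exp (κ * p.2) * ω₁ p.1)
    (hφ : φ = fun p => Real.exp (μ * p.2) * φ₁ p.1)
    (hθ : θ = fun p => Real.exp (μ * p.2) *
      ((1 / (μ + κ)) * (deriv φ₁ p.1 - (deriv ω₁ p.1 / ω₁ p.1) * φ₁ p.1))) :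
    ∀ p ∈ I ×ˢ (Set.univ : Set ℝ),
      pd (1, 0) (fun q => ω q * θ q) p
          = -((ω p) ^ 2) * pd (0, 1) (fun q => φ q / ω q) p
      ∧ pd (0, 1) (fun q => ω q * θ q) p
          = (ω p) ^ 2 * pd (1, 0) (fun q => φ q / ω q) p := by
  subst hω hφ hθ
  rintro ⟨x, y⟩ ⟨hx, -⟩
  have hω₁x : DifferentiableAt ℝ ω₁ x :=
    (hω₁.contDiffAt (hI.mem_nhds hx)).differentiableAt two_ne_zero
  have hφ₁x : DifferentiableAt ℝ φ₁ x :=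
    (hφ₁.contDiffAt (hI.mem_nhds hx)).differentiableAt two_ne_zero
  exact moutardRelationsAt_sepExp y hω₁x.hasDerivAt hφ₁x.hasDerivAt (hω₁0 x hx)
    (hasDerivAt_mul_darbouxTransform hμκ hω₁x hφ₁x
      (hω₁.hasDerivAt_deriv_of_isOpen hI hx)
      (hφ₁.hasDerivAt_deriv_of_isOpen hI hx) (hω₁0 x hx) (hω₁eq x hx) (hφ₁eq x hx))
    (mul_darbouxTransform hμκ (hω₁0 x hx))

/-- the Darboux transformation is the one-dimensional reduction
of the Moutard transformation with generating solution `ω(x,y) = e^{κy} ω₁(x)`: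
with `φ(x,y) = e^{μy} φ₁(x)` and `θ(x,y) = e^{μy} θ₁(x)`,
`θ₁ = (1/(μ+κ)) (φ₁' - (ω₁'/ω₁) φ₁)`, the pair `(φ, θ)` satisfies the Moutard
relations with respect to `ω` on `I × ℝ`. -/
theorem darboux_is_reduction_of_moutard
    (I : Set ℝ) (hI : IsOpen I)
    (u ω₁ φ₁ : ℝ → ℝ) (κ μ : ℝ)
    (hμκ : μ + κ ≠ 0)
    (hu : ContinuousOn u I)
    (hω₁ : ContDiffOn ℝ 2 ω₁ I)
    (hω₁0 : ∀ x ∈ I, ω₁ x ≠ 0)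
    (hω₁eq : ∀ x ∈ I, -(deriv (deriv ω₁) x) + u x * ω₁ x = κ ^ 2 * ω₁ x)
    (hφ₁ : ContDiffOn ℝ 2 φ₁ I)
    (hφ₁eq : ∀ x ∈ I, -(deriv (deriv φ₁) x) + u x * φ₁ x = μ ^ 2 * φ₁ x)
    (ω φ θ : ℝ × ℝ → ℝ)
    (hω : ω = fun p => Real.exp (κ * p.2) * ω₁ p.1)
    (hφ : φ = fun p => Real.exp (μ * p.2) * φ₁ p.1)
    (hθ : θ = fun p => Real.exp (μ * p.2) *
      ((1 / (μ + κ)) * (deriv φ₁ p.1 - (deriv ω₁ p.1 / ω₁ p.1) * φ₁ p.1))) :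
    ∀ p ∈ I ×ˢ (Set.univ : Set ℝ),
      pd (1, 0) (fun q => ω q * θ q) p
          = -((ω p) ^ 2) * pd (0, 1) (fun q => φ q / ω q) p
      ∧ pd (0, 1) (fun q => ω q * θ q) p
          = (ω p) ^ 2 * pd (1, 0) (fun q => φ q / ω q) p :=
  darboux_is_reduction_of_moutard_general I hI u ω₁ φ₁ κ μ hμκ hω₁ hω₁0 hω₁eq hφ₁ hφ₁eq ω φ θ hω hφ
    hθ
end
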